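/- Let G be a finite p-group and N a normal subgroup of G with [G,N] ⊆ N^p. Then γ_i^G(N) ⊆ D_i(N) for every i ≥ 2, where γ_2^G(N) = [G,N] and γ_{i+1}^G(N) = [γ_i^G(N), N], and D_i(N) is the i-th term of the Jennings series of N. -/

import Mathlib

/-- The Jennings (Brauer–Jennings–Zassenhaus) series of a group:
`D_n(G) = ∏_{i p^j ≥ n} γ_i(G)^{p^j}` (here `γ_{i+1}(G) = lowerCentralSeries G i`). -/
def jennings (p : ℕ) (G : Type*) [Group G] (n : ℕ) : Subgroup G :=
  ⨆ (i : ℕ) (j : ℕ) (_ : n ≤ (i + 1) * p ^ j),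
    Subgroup.closure {x : G | ∃ y ∈ (⊤ : Subgroup G).lowerCentralSeries i, x = y ^ p ^ j}

/-- The relative lower central series: `γ_1^G(N) = G`, `γ_{n+1}^G(N) = [γ_n^G(N), N]`.
Here `gammaRel N i` is `γ_{i+1}^G(N)`. -/
def gammaRel {G : Type*} [Group G] (N : Subgroup G) : ℕ → Subgroup G
  | 0 => ⊤
  | n + 1 => ⁅gammaRel N n, N⁆

/-!
Write `γ_k` for the lower central series of `N` (`γ_1 = N`) and `M^p` for the subgroup generated
by `p`-th powers of `M`. By induction, `γ_{k+1}^G(N) ≤ γ_k^p γ_{k+1}` for `k ≥ 1`: for `k = 1` this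
is the hypothesis `[G, N] ≤ N^p`, and commutation with `N` maps `γ_k^p γ_{k+1}` into
`γ_{k+1}^p γ_{k+2}` because, for `z ∈ γ_k`, `[z, n]` commutes with `z` modulo `γ_{k+2}`, whence
`[z^p, n] ≡ [z, n]^p`. As `p ≥ 2`, both `γ_k^p ≤ D_{kp}(N)` and `γ_{k+1}` lie in `D_{k+1}(N)`.
-/

open Subgroup

open scoped commutatorElement

section General

variable {G : Type*} [Group G]

namespace Subgroup

def powClosure (H : Subgroup G) (n : ℕ) : Subgroup G :=
  closure {x | ∃ y ∈ H, x = y ^ n}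

theorem powClosure_one (H : Subgroup G) : H.powClosure 1 = H := by
  simp [powClosure]

theorem map_powClosure {G' : Type*} [Group G'] (f : G →* G') (H : Subgroup G) (n : ℕ) :
    (H.powClosure n).map f = (H.map f).powClosure n := by
  rw [powClosure, powClosure, MonoidHom.map_closure]
  congr 1
  ext x
  simp [eq_comm]

instance powClosure_normal (H : Subgroup G) [H.Normal] (n : ℕ) : (H.powClosure n).Normal :=
  normal_iff_map_conj_eq.mpr fun g => by rw [map_powClosure, Normal.map_conj_eq]

theorem commutator_closure_le {S : Set G} {K C : Subgroup G} [hC : C.Normal]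
    (h : ∀ s ∈ S, ∀ k ∈ K, ⁅s, k⁆ ∈ C) : ⁅closure S, K⁆ ≤ C := by
  rw [commutator_le]
  intro g hg k hk
  induction hg using closure_induction with
  | mem s hs => exact h s hs k hk
  | one => simp
  | mul x y _ _ hx hy =>
    rw [commutatorElement_mul_left_eq_conj_mul]
    exact mul_mem (hC.conj_mem _ hy x) hx
  | inv x _ hx =>
    rw [commutatorElement_inv_left, ← commutatorElement_inv]
    simpa using hC.conj_mem _ (inv_mem hx) x⁻¹

end Subgroup

theorem Commute.commutatorElement_pow_left {a b : G} (h : Commute ⁅a, b⁆ a) (m : ℕ) :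
    ⁅a ^ m, b⁆ = ⁅a, b⁆ ^ m := by
  induction m with
  | zero => simp
  | succ m ih =>
    rw [pow_succ', commutatorElement_mul_left_eq_conj_mul, ih, (h.pow_left m).symm.eq,
      mul_inv_cancel_right, pow_succ]

theorem commutatorElement_pow_left_mem {C : Subgroup G} [C.Normal] {a b : G}
    (h : ⁅⁅a, b⁆, a⁆ ∈ C) (m : ℕ) : (⁅a, b⁆ ^ m)⁻¹ * ⁅a ^ m, b⁆ ∈ C := by
  let φ := QuotientGroup.mk' C
  have hc : Commute ⁅φ a, φ b⁆ (φ a) := by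
    rw [← commutatorElement_eq_one_iff_commute, ← map_commutatorElement, ← map_commutatorElement]
    exact (QuotientGroup.eq_one_iff _).mpr h
  rw [← QuotientGroup.eq]
  change φ (⁅a, b⁆ ^ m) = φ ⁅a ^ m, b⁆
  rw [map_pow, map_commutatorElement, map_commutatorElement, map_pow,
    hc.commutatorElement_pow_left]

section Jennings

variable (p : ℕ) (H : Type*) [Group H]

/-- `γ_{k+1}(H)^p γ_{k+2}(H)`, with `γ_{k+1}(H) = (⊤ : Subgroup H).lowerCentralSeries k`. -/
def lowerCentralPowSup (k : ℕ) : Subgroup H :=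
  ((⊤ : Subgroup H).lowerCentralSeries k).powClosure p ⊔
    (⊤ : Subgroup H).lowerCentralSeries (k + 1)

instance lowerCentralPowSup_normal (k : ℕ) : (lowerCentralPowSup p H k).Normal :=
  sup_normal _ _

theorem powClosure_lowerCentralSeries_le_jennings {n i j : ℕ} (h : n ≤ (i + 1) * p ^ j) :
    ((⊤ : Subgroup H).lowerCentralSeries i).powClosure (p ^ j) ≤ jennings p H n :=
  le_iSup_of_le i <| le_iSup_of_le j <| le_iSup_of_le h le_rfl

theorem lowerCentralPowSup_le_jennings (hp : 2 ≤ p) (k : ℕ) :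
    lowerCentralPowSup p H k ≤ jennings p H (k + 2) := by
  refine sup_le ?_ ?_
  · simpa using powClosure_lowerCentralSeries_le_jennings p H (i := k) (j := 1) (by nlinarith)
  · simpa [powClosure_one] using
      powClosure_lowerCentralSeries_le_jennings p H (i := k + 1) (j := 0) (by simp)

theorem commutator_lowerCentralPowSup_le (k : ℕ) :
    ⁅lowerCentralPowSup p H k, ⊤⁆ ≤ lowerCentralPowSup p H (k + 1) := by
  set γ := (⊤ : Subgroup H).lowerCentralSeries
  have hgen :
      lowerCentralPowSup p H k = closure ({x | ∃ y ∈ γ k, x = y ^ p} ∪ γ (k + 1)) := by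
    rw [Subgroup.closure_union, Subgroup.closure_eq]
    rfl
  rw [hgen]
  refine commutator_closure_le ?_
  rintro s (⟨z, hz, rfl⟩ | hs) n -
  · have hzn : ⁅z, n⁆ ∈ γ (k + 1) := commutator_mem_commutator hz (mem_top n)
    have hrest : (⁅z, n⁆ ^ p)⁻¹ * ⁅z ^ p, n⁆ ∈ γ (k + 2) :=
      commutatorElement_pow_left_mem (commutator_mem_commutator hzn (mem_top z)) p
    rw [← mul_inv_cancel_left (⁅z, n⁆ ^ p) ⁅z ^ p, n⁆]
    exact mul_mem (mem_sup_left (subset_closure ⟨_, hzn, rfl⟩)) (mem_sup_right hrest)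
  · exact mem_sup_right (commutator_mem_commutator hs (mem_top n))

end Jennings

theorem gammaRel_succ_le_map_lowerCentralPowSup {p : ℕ} {N : Subgroup G}
    (h : ⁅(⊤ : Subgroup G), N⁆ ≤ N.powClosure p) (k : ℕ) :
    gammaRel N (k + 1) ≤ (lowerCentralPowSup p N k).map N.subtype := by
  have hN : N = (⊤ : Subgroup N).map N.subtype := by
    rw [← MonoidHom.range_eq_map, subtype_range]
  induction k with
  | zero =>
    calc gammaRel N 1 = ⁅⊤, N⁆ := rfl
      _ ≤ ((⊤ : Subgroup N).powClosure p).map N.subtype := by rwa [map_powClosure, ← hN]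
      _ ≤ _ := map_mono le_sup_left
  | succ k ih =>
    calc gammaRel N (k + 2) = ⁅gammaRel N (k + 1), N⁆ := rfl
      _ ≤ ⁅(lowerCentralPowSup p N k).map N.subtype, (⊤ : Subgroup N).map N.subtype⁆ :=
        commutator_mono ih hN.le
      _ = (⁅lowerCentralPowSup p N k, ⊤⁆ : Subgroup N).map N.subtype :=
        (map_commutator _ _ _).symm
      _ ≤ _ := map_mono (commutator_lowerCentralPowSup_le p N k)

end General

theorem gammaRel_le_jennings_general (p : ℕ) (hp : p.Prime)
    (G : Type*) [Group G]
    (N : Subgroup G)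
    (h : ⁅(⊤ : Subgroup G), N⁆ ≤ Subgroup.closure {x : G | ∃ y ∈ N, x = y ^ p}) :
    ∀ i : ℕ, 2 ≤ i → gammaRel N (i - 1) ≤ (jennings p ↥N i).map N.subtype := by
  intro i hi
  obtain ⟨k, rfl⟩ : ∃ k, i = k + 2 := ⟨i - 2, by omega⟩
  exact (gammaRel_succ_le_map_lowerCentralPowSup h k).trans
    (map_mono (lowerCentralPowSup_le_jennings p N hp.two_le k))

/-- Let `G` be a finite `p`-group and `N ⊴ G` with `[G,N] ⊆ N^p`. Then
`γ_i^G(N) ⊆ D_i(N)` for every `i ≥ 2`. -/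
theorem gammaRel_le_jennings (p : ℕ) (hp : p.Prime)
    (G : Type*) [Group G] [Finite G] (hG : ∃ s : ℕ, Nat.card G = p ^ s)
    (N : Subgroup G) [N.Normal]
    (h : ⁅(⊤ : Subgroup G), N⁆ ≤ Subgroup.closure {x : G | ∃ y ∈ N, x = y ^ p}) :
    ∀ i : ℕ, 2 ≤ i → gammaRel N (i - 1) ≤ (jennings p ↥N i).map N.subtype :=
  gammaRel_le_jennings_general p hp G N h
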